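/- Let e_j(y) = exp((i/h)⟨y, ξ_j⟩), j = 1, ..., N, where the ξ_j ∈ ℝⁿ are pairwise separated by at least h: |ξ_j - ξ_m| ≥ c₀ h for j ≠ m. Then the Gram matrix M_{jm} = ∫_{B_1(0)} e_j(y) \overline{e_m(y)} dy satisfies: the functions e_j are almost orthogonal in the sense that there exists C (depending on n, c₀ but not on h or N) such that for all a ∈ ℝ^N, ‖Σ_j a_j e_j‖²_{L²(B_1(0))} ≤ C ‖a‖²_{ℓ²}. -/

import Mathlib

/-!
Majorize the indicator of the unit ball by the Gaussian `exp ((1 - ‖y‖²) / 2)`. Against the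
Gaussian weight the Gram matrix of the plane waves `exp (i ⟪η_j, y⟫)` is explicit, with entries
`(2π)^(n/2) exp (-‖η_j - η_m‖² / 2)`. The rescaled frequencies `η_j = ξ_j / h` are
`c₀`-separated, so the balls of radius `c₀ / 2` around them are disjoint; comparing each entry
with the integral of a fixed Gaussian over such a ball bounds every row sum of the Gram matrix
independently of `h` and `N`, and Schur's test concludes.
-/

open MeasureTheory Metric Complex Real RealInnerProductSpace Module

lemma exp_neg_sq_dist_le_of_dist_le {X : Type*} [PseudoMetricSpace X] {x z w : X} {r : ℝ}
    (hx : dist x w ≤ r) :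
    Real.exp (-dist z w ^ 2 / 2) ≤ Real.exp (r ^ 2 / 2) * Real.exp (-dist x z ^ 2 / 4) := by
  rw [← Real.exp_add, Real.exp_le_exp]
  have htri : dist x z ≤ dist z w + r := by
    linarith [dist_triangle x w z, dist_comm w z]
  nlinarith [pow_le_pow_left₀ dist_nonneg htri 2, sq_nonneg (dist z w - r),
    dist_nonneg (x := z) (y := w)]

lemma sum_sum_mul_le_of_sum_le {ι : Type*} [Fintype ι] {K : ι → ι → ℝ}
    (hK : ∀ j m, 0 ≤ K j m) (hsymm : ∀ j m, K j m = K m j) {S : ℝ} (hS : ∀ j, ∑ m, K j m ≤ S)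
    (a : ι → ℝ) :
    ∑ j, ∑ m, a j * a m * K j m ≤ S * ∑ j, a j ^ 2 := by
  have hswap : ∑ j, ∑ m, a m ^ 2 / 2 * K j m = ∑ j, ∑ m, a j ^ 2 / 2 * K j m := by
    rw [Finset.sum_comm]
    simp_rw [hsymm]
  calc ∑ j, ∑ m, a j * a m * K j m
      ≤ ∑ j, ∑ m, (a j ^ 2 / 2 * K j m + a m ^ 2 / 2 * K j m) := by
        gcongr with j _ m _
        nlinarith [hK j m, mul_nonneg (hK j m) (sq_nonneg (a j - a m))]
    _ = ∑ j, a j ^ 2 * ∑ m, K j m := by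
        simp_rw [Finset.sum_add_distrib, hswap, ← Finset.sum_add_distrib, Finset.mul_sum]
        congr! 2
        ring
    _ ≤ ∑ j, a j ^ 2 * S := by gcongr with j; exact hS j
    _ = S * ∑ j, a j ^ 2 := by rw [Finset.mul_sum]; simp_rw [mul_comm]

lemma rexp_neg_sq_dist_div_four_eq {E : Type*} [SeminormedAddCommGroup E] (z : E) :
    (fun x : E => Real.exp (-dist x z ^ 2 / 4)) = fun x => Real.exp (-4⁻¹ * ‖x - z‖ ^ 2) := by
  ext x
  rw [dist_eq_norm]
  ring_nf

lemma normSq_sum_mul_cexp_I_mul {ι : Type*} [Fintype ι] (a t : ι → ℝ) :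
    (normSq (∑ j, (a j : ℂ) * cexp (I * t j)) : ℂ) =
      ∑ j, ∑ m, ((a j * a m : ℝ) : ℂ) * cexp (I * (t j - t m : ℝ)) := by
  rw [← mul_conj, map_sum, Finset.sum_mul_sum]
  refine Finset.sum_congr rfl fun j _ => Finset.sum_congr rfl fun m _ => ?_
  rw [map_mul, conj_ofReal, ← exp_conj, map_mul, conj_I, conj_ofReal, mul_mul_mul_comm,
    ← Complex.exp_add]
  push_cast
  ring_nf

section PlaneWaves

variable {V : Type*} [NormedAddCommGroup V] [InnerProductSpace ℝ V] {ι : Type*} [Fintype ι]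

noncomputable def planeWaveSum (a : ι → ℝ) (η : ι → V) (y : V) : ℂ :=
  ∑ j, (a j : ℂ) * cexp (I * ⟪η j, y⟫)

lemma continuous_planeWaveSum (a : ι → ℝ) (η : ι → V) : Continuous (planeWaveSum a η) := by
  unfold planeWaveSum
  fun_prop

lemma ofReal_gaussian_mul_normSq_planeWaveSum (a : ι → ℝ) (η : ι → V) (y : V) :
    ((Real.exp (-‖y‖ ^ 2 / 2) * normSq (planeWaveSum a η y) : ℝ) : ℂ) =
      ∑ j, ∑ m, ((a j * a m : ℝ) : ℂ) * cexp (-(1 / 2 : ℂ) * ‖y‖ ^ 2 + I * ⟪η j - η m, y⟫) := by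
  rw [ofReal_mul, planeWaveSum, normSq_sum_mul_cexp_I_mul, Finset.mul_sum]
  refine Finset.sum_congr rfl fun j _ => ?_
  rw [Finset.mul_sum]
  refine Finset.sum_congr rfl fun m _ => ?_
  rw [inner_sub_left, ofReal_exp, mul_left_comm, ← Complex.exp_add]
  push_cast
  ring_nf

variable [FiniteDimensional ℝ V] [MeasurableSpace V] [BorelSpace V]

lemma integrable_rexp_neg_mul_sq_norm {b : ℝ} (hb : 0 < b) :
    Integrable (fun v : V => Real.exp (-b * ‖v‖ ^ 2)) := by
  convert (GaussianFourier.integrable_cexp_neg_mul_sq_norm_add (V := V) (b := (b : ℂ))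
    (by simpa using hb) 0 0).norm using 2 with v
  simp [Complex.norm_exp, ← ofReal_pow]

lemma integrable_rexp_neg_sq_dist_div_four (z : V) :
    Integrable (fun x : V => Real.exp (-dist x z ^ 2 / 4)) := by
  rw [rexp_neg_sq_dist_div_four_eq]
  exact (integrable_rexp_neg_mul_sq_norm (by norm_num : (0 : ℝ) < 4⁻¹)).comp_sub_right z

lemma integral_rexp_neg_sq_dist_div_four (z : V) :
    ∫ x : V, Real.exp (-dist x z ^ 2 / 4) = (4 * π) ^ (finrank ℝ V / 2 : ℝ) := by
  rw [rexp_neg_sq_dist_div_four_eq,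
    integral_sub_right_eq_self (fun x => Real.exp (-4⁻¹ * ‖x‖ ^ 2)) z,
    GaussianFourier.integral_rexp_neg_mul_sq_norm (by norm_num), div_inv_eq_mul, mul_comm]

lemma integral_cexp_neg_half_mul_sq_norm_add_I_mul_inner (w : V) :
    ∫ v : V, cexp (-(1 / 2 : ℂ) * ‖v‖ ^ 2 + I * ⟪w, v⟫) =
      ((2 * π) ^ (finrank ℝ V / 2 : ℝ) * Real.exp (-‖w‖ ^ 2 / 2) : ℝ) := by
  rw [GaussianFourier.integral_cexp_neg_mul_sq_norm_add (by norm_num) I w, I_sq,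
    ofReal_mul, ofReal_cpow (by positivity), ofReal_exp]
  push_cast
  congr 2 <;> ring

lemma measureReal_ball_pos (x : V) {r : ℝ} (hr : 0 < r) : 0 < volume.real (ball x r) :=
  ENNReal.toReal_pos (measure_ball_pos volume x hr).ne' measure_ball_lt_top.ne

lemma exp_neg_sq_dist_mul_volume_ball_le (z w : V) (r : ℝ) :
    Real.exp (-dist z w ^ 2 / 2) * volume.real (ball w r) ≤
      Real.exp (r ^ 2 / 2) * ∫ x in ball w r, Real.exp (-dist x z ^ 2 / 4) := by
  rw [← integral_const_mul]
  exact setIntegral_ge_of_const_le_real measurableSet_ball measure_ball_lt_top.ne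
    (fun x hx => exp_neg_sq_dist_le_of_dist_le (mem_ball.1 hx).le)
    ((integrable_rexp_neg_sq_dist_div_four z).const_mul _).integrableOn

lemma sum_exp_neg_sq_dist_le {r : ℝ} (hr : 0 < r) {z : ι → V}
    (hz : Pairwise fun j m => 2 * r ≤ dist (z j) (z m)) (j : ι) :
    ∑ m, Real.exp (-dist (z j) (z m) ^ 2 / 2) ≤
      Real.exp (r ^ 2 / 2) * (4 * π) ^ (finrank ℝ V / 2 : ℝ) / volume.real (ball (0 : V) r) := by
  have hg := integrable_rexp_neg_sq_dist_div_four (z j)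
  have hdisj : Set.Pairwise (Finset.univ : Finset ι)
      (Function.onFun Disjoint fun m => ball (z m) r) :=
    fun m _ m' _ hmm' => ball_disjoint_ball (by linarith [hz hmm'])
  rw [le_div_iff₀ (measureReal_ball_pos 0 hr), Finset.sum_mul]
  calc ∑ m, Real.exp (-dist (z j) (z m) ^ 2 / 2) * volume.real (ball (0 : V) r)
      ≤ ∑ m, Real.exp (r ^ 2 / 2) * ∫ x in ball (z m) r, Real.exp (-dist x (z j) ^ 2 / 4) := by
        refine Finset.sum_le_sum fun m _ => ?_
        rw [← Measure.addHaar_real_ball_center volume (z m)]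
        exact exp_neg_sq_dist_mul_volume_ball_le _ _ _
    _ = Real.exp (r ^ 2 / 2) *
          ∫ x in ⋃ m ∈ Finset.univ, ball (z m) r, Real.exp (-dist x (z j) ^ 2 / 4) := by
        rw [integral_biUnion_finset _ (fun m _ => measurableSet_ball) hdisj
          (fun m _ => hg.integrableOn), Finset.mul_sum]
    _ ≤ Real.exp (r ^ 2 / 2) * ∫ x, Real.exp (-dist x (z j) ^ 2 / 4) :=
        mul_le_mul_of_nonneg_left
          (setIntegral_le_integral hg (.of_forall fun x => (Real.exp_pos _).le))
          (Real.exp_pos _).le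
    _ = Real.exp (r ^ 2 / 2) * (4 * π) ^ (finrank ℝ V / 2 : ℝ) := by
        rw [integral_rexp_neg_sq_dist_div_four]

lemma setIntegral_ball_le_exp_half_mul_integral_gaussian_mul {f : V → ℝ} (hf : Continuous f)
    (hf0 : ∀ y, 0 ≤ f y) (hint : Integrable fun y => Real.exp (-‖y‖ ^ 2 / 2) * f y) :
    ∫ y in ball (0 : V) 1, f y ≤ Real.exp (1 / 2) * ∫ y, Real.exp (-‖y‖ ^ 2 / 2) * f y := by
  have hweight : ∀ y ∈ ball (0 : V) 1,
      f y ≤ Real.exp (1 / 2) * (Real.exp (-‖y‖ ^ 2 / 2) * f y) := by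
    intro y hy
    have hy1 : ‖y‖ < 1 := mem_ball_zero_iff.1 hy
    rw [← mul_assoc, ← Real.exp_add]
    exact le_mul_of_one_le_left (hf0 y) (Real.one_le_exp (by nlinarith [norm_nonneg y]))
  have hf_ball : IntegrableOn f (ball (0 : V) 1) :=
    (hf.locallyIntegrable.integrableOn_isCompact (isCompact_closedBall 0 1)).mono_set
      ball_subset_closedBall
  rw [← integral_const_mul]
  calc ∫ y in ball (0 : V) 1, f y
      ≤ ∫ y in ball (0 : V) 1, Real.exp (1 / 2) * (Real.exp (-‖y‖ ^ 2 / 2) * f y) :=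
        setIntegral_mono_on hf_ball (hint.const_mul _).integrableOn measurableSet_ball hweight
    _ ≤ ∫ y, Real.exp (1 / 2) * (Real.exp (-‖y‖ ^ 2 / 2) * f y) :=
        setIntegral_le_integral (hint.const_mul _)
          (.of_forall fun y => by have := hf0 y; positivity)

lemma integrable_gaussian_mul_normSq_planeWaveSum (a : ι → ℝ) (η : ι → V) :
    Integrable fun y => Real.exp (-‖y‖ ^ 2 / 2) * normSq (planeWaveSum a η y) := by
  have hC : Integrable fun y : V =>
      ((Real.exp (-‖y‖ ^ 2 / 2) * normSq (planeWaveSum a η y) : ℝ) : ℂ) := by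
    simp_rw [ofReal_gaussian_mul_normSq_planeWaveSum]
    exact integrable_finsetSum _ fun j _ => integrable_finsetSum _ fun m _ =>
      (GaussianFourier.integrable_cexp_neg_mul_sq_norm_add (by norm_num) I (η j - η m)).const_mul _
  simpa only [RCLike.re_to_complex, ofReal_re] using hC.re

lemma integral_gaussian_mul_normSq_planeWaveSum (a : ι → ℝ) (η : ι → V) :
    ∫ y, Real.exp (-‖y‖ ^ 2 / 2) * normSq (planeWaveSum a η y) =
      (2 * π) ^ (finrank ℝ V / 2 : ℝ) *
        ∑ j, ∑ m, a j * a m * Real.exp (-dist (η j) (η m) ^ 2 / 2) := by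
  have hint : ∀ j m, Integrable fun y : V =>
      ((a j * a m : ℝ) : ℂ) * cexp (-(1 / 2 : ℂ) * ‖y‖ ^ 2 + I * ⟪η j - η m, y⟫) := fun j m =>
    (GaussianFourier.integrable_cexp_neg_mul_sq_norm_add (by norm_num) I (η j - η m)).const_mul _
  apply ofReal_injective
  rw [← integral_complex_ofReal]
  simp_rw [ofReal_gaussian_mul_normSq_planeWaveSum]
  rw [integral_finsetSum _ fun j _ => integrable_finsetSum _ fun m _ => hint j m]
  simp_rw [integral_finsetSum _ fun m _ => hint _ m, integral_const_mul,
    integral_cexp_neg_half_mul_sq_norm_add_I_mul_inner, dist_eq_norm]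
  push_cast
  rw [Finset.mul_sum]
  refine Finset.sum_congr rfl fun j _ => ?_
  rw [Finset.mul_sum]
  exact Finset.sum_congr rfl fun m _ => by ring

theorem setIntegral_ball_normSq_planeWaveSum_le {r : ℝ} (hr : 0 < r) {η : ι → V}
    (hη : Pairwise fun j m => 2 * r ≤ dist (η j) (η m)) (a : ι → ℝ) :
    ∫ y in ball (0 : V) 1, normSq (planeWaveSum a η y) ≤
      Real.exp (1 / 2) * (2 * π) ^ (finrank ℝ V / 2 : ℝ) *
        (Real.exp (r ^ 2 / 2) * (4 * π) ^ (finrank ℝ V / 2 : ℝ) / volume.real (ball (0 : V) r)) *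
          ∑ j, a j ^ 2 := by
  have hschur := sum_sum_mul_le_of_sum_le (fun _ _ => (Real.exp_pos _).le)
    (fun j m => by rw [dist_comm]) (sum_exp_neg_sq_dist_le hr hη) a
  calc ∫ y in ball (0 : V) 1, normSq (planeWaveSum a η y)
      ≤ Real.exp (1 / 2) * ∫ y, Real.exp (-‖y‖ ^ 2 / 2) * normSq (planeWaveSum a η y) :=
        setIntegral_ball_le_exp_half_mul_integral_gaussian_mul
          (continuous_normSq.comp (continuous_planeWaveSum a η)) (fun y => normSq_nonneg _)
          (integrable_gaussian_mul_normSq_planeWaveSum a η)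
    _ = Real.exp (1 / 2) * (2 * π) ^ (finrank ℝ V / 2 : ℝ) *
          ∑ j, ∑ m, a j * a m * Real.exp (-dist (η j) (η m) ^ 2 / 2) := by
        rw [integral_gaussian_mul_normSq_planeWaveSum, mul_assoc]
    _ ≤ _ := by
        rw [mul_assoc _ _ (∑ j, a j ^ 2)]
        exact mul_le_mul_of_nonneg_left hschur (by positivity)

end PlaneWaves

/-- Almost orthogonality of `h`-separated plane waves on the unit ball: if the
frequencies `ξ_j` are pairwise separated by at least `c₀ h`, then
`‖Σ a_j e^{(i/h)⟨y,ξ_j⟩}‖²_{L²(B₁(0))} ≤ C ‖a‖²_{ℓ²}` with `C = C(n, c₀)`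
independent of `h` and `N`. -/
theorem stmt16 (n : ℕ) (c₀ : ℝ) (hc₀ : 0 < c₀) :
    ∃ C : ℝ, 0 < C ∧
      ∀ h : ℝ, 0 < h →
      ∀ (N : ℕ) (ξ : Fin N → Fin n → ℝ),
        (∀ j m : Fin N, j ≠ m →
          c₀ * h ≤ Real.sqrt (∑ i, (ξ j i - ξ m i) ^ 2)) →
      ∀ a : Fin N → ℝ,
        (∫ y in Metric.ball (0 : EuclideanSpace ℝ (Fin n)) 1,
            Complex.normSq (∑ j, (a j : ℂ) *
              Complex.exp (Complex.I * ((h⁻¹ : ℝ) * ∑ i, y i * ξ j i))))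
          ≤ C * ∑ j, a j ^ 2 := by
  let E := EuclideanSpace ℝ (Fin n)
  have hball := measureReal_ball_pos (0 : E) (half_pos hc₀)
  refine ⟨Real.exp (1 / 2) * (2 * π) ^ (finrank ℝ E / 2 : ℝ) *
      (Real.exp ((c₀ / 2) ^ 2 / 2) * (4 * π) ^ (finrank ℝ E / 2 : ℝ) /
        volume.real (ball (0 : E) (c₀ / 2))),
    by positivity, fun h hh N ξ hξ a => ?_⟩
  let η : Fin N → E := fun j => h⁻¹ • WithLp.toLp 2 (ξ j)
  have hwave : ∀ y : E, ∑ j, (a j : ℂ) * cexp (I * ((h⁻¹ : ℝ) * ∑ i, y i * ξ j i)) =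
      planeWaveSum a η y := by
    intro y
    refine Finset.sum_congr rfl fun j _ => ?_
    rw [real_inner_smul_left, PiLp.inner_apply]
    simp only [ofReal_inv, ofReal_sum, ofReal_mul, RCLike.inner_apply, ringHom_apply]
  have hsep : Pairwise fun j m => 2 * (c₀ / 2) ≤ dist (η j) (η m) := by
    intro j m hjm
    rw [dist_smul₀, EuclideanSpace.dist_eq, Real.norm_of_nonneg (inv_nonneg.2 hh.le),
      le_inv_mul_iff₀ hh]
    simp only [Real.dist_eq, sq_abs]
    linarith [hξ j m hjm]
  simpa only [hwave] using setIntegral_ball_normSq_planeWaveSum_le (half_pos hc₀) hsep a
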